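/- Let 𝒜 ⊂ ℤ be an admissible set with card 𝒜 = n ≥ 1, let m ∈ [1,2], set λ_a = √(a² + m) for a ∈ ℤ, let M be the n×n matrix with entries M_{kl} = (3/(2π))(4 − 3δ_{kl})/(λ_k λ_l) for k, l ∈ 𝒜 (M is symmetric and invertible), let ℒ = ℤ \ 𝒜, let D = [1,2]^𝒜, let Ω(ρ) = ω(m) + ν M ρ where ω(m) = (√(a²+m))_{a∈𝒜}, and let Λ_a(ρ) = λ_a + ν (3/π) (1/λ_a) ∑_{l∈𝒜} ρ_l/λ_l for a ∈ ℒ. Then for every γ > 0 there exist ν₀ > 0 and c > 0 depending only on 𝒜 and γ such that for every 0 < ν ≤ ν₀ the following holds: if Ω′ : ℝ^𝒜 → ℝ^𝒜 is differentiable on D and satisfies ‖Ω′(ρ) − Ω(ρ)‖ + ‖DΩ′(ρ) − νM‖ ≤ c ν for all ρ ∈ D, then for every k ∈ ℤ^𝒜 with |k| > ν^{−γ} there is a unit vector z_k ∈ ℝ^𝒜 (one may take z_k = Mk/‖Mk‖) such that for all ρ ∈ D and all a, b ∈ ℒ: (i) |⟨∂_ρ(k · Ω′(ρ)), z_k⟩|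 ≥ ν; (ii) |⟨∂_ρ(k · Ω′(ρ) ± Λ_a(ρ)), z_k⟩| ≥ ν; (iii) |⟨∂_ρ(k · Ω′(ρ) + Λ_a(ρ) + Λ_b(ρ)), z_k⟩| ≥ ν; (iv) |⟨∂_ρ(k · Ω′(ρ) + Λ_a(ρ) − Λ_b(ρ)), z_k⟩| ≥ ν. -/

import Mathlib

open scoped RealInnerProductSpace

/-!
Take `z = Mk / ‖Mk‖`. Writing `M = (3/2π) D (4J - 3I) D` with `D = diag(1/λ_a)` and `J` the
all-ones matrix, one has `‖(4J - 3I) w‖ ≥ ‖w‖`, hence `‖Mk‖ ≥ ε ‖k‖` with `ε > 0` depending only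
on `𝒜`. Since `M` is symmetric, `⟨∂_ρ(k · Ω′), z⟩ = ⟨k, DΩ′ z⟩ ≥ ν ‖Mk‖ - cν ‖k‖ ≥ (ε/2) ν ‖k‖`
for `c = ε/2`, whereas `|⟨∂_ρ Λ_a, z⟩| ≤ nν` for every `a`. As `n ‖k‖ ≥ |k| > ν^{-γ}`, the first
term dominates the at most two `Λ`-terms once `ν` is small.
-/

/-- The matrix `M` with entries `M_{kl} = (3/(2π))(4 − 3δ_{kl})/(λ_k λ_l)`, `k, l ∈ 𝒜`,
where `λ_a = √(a² + m)`. -/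
noncomputable def waveM (A : Finset ℤ) (m : ℝ) : Matrix ↥A ↥A ℝ :=
  Matrix.of fun k l =>
    (3/(2*Real.pi)) * (4 - 3 * (if k = l then (1:ℝ) else 0)) /
      (Real.sqrt (((k : ℤ) : ℝ)^2 + m) * Real.sqrt (((l : ℤ) : ℝ)^2 + m))

/-- The internal frequency map `Ω(ρ) = ω(m) + ν M ρ`, where `ω(m)_a = √(a² + m)`. -/
noncomputable def waveOmega (A : Finset ℤ) (m ν : ℝ) (ρ : EuclideanSpace ℝ ↥A) :
    EuclideanSpace ℝ ↥A :=
  (EuclideanSpace.equiv ↥A ℝ).symm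
    (fun a => Real.sqrt (((a : ℤ) : ℝ)^2 + m) + ν * (waveM A m).mulVec ρ a)

/-- The external frequencies `Λ_a(ρ) = λ_a + ν (3/π) (1/λ_a) ∑_{l∈𝒜} ρ_l/λ_l`. -/
noncomputable def waveLambda (A : Finset ℤ) (m ν : ℝ) (a : ℤ)
    (ρ : EuclideanSpace ℝ ↥A) : ℝ :=
  Real.sqrt ((a : ℝ)^2 + m) +
    ν * (3/Real.pi) * (1/Real.sqrt ((a : ℝ)^2 + m)) *
      ∑ l : ↥A, ρ l / Real.sqrt (((l : ℤ) : ℝ)^2 + m)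

/-- The parameter cube `D = [1,2]^𝒜`. -/
def waveCube (A : Finset ℤ) : Set (EuclideanSpace ℝ ↥A) :=
  {ρ | ∀ a : ↥A, ρ a ∈ Set.Icc (1:ℝ) 2}

lemma sum_abs_le_card_mul_norm {ι : Type*} [Fintype ι] (v : EuclideanSpace ℝ ι) :
    ∑ i, |v i| ≤ Fintype.card ι * ‖v‖ := by
  calc ∑ i, |v i| ≤ ∑ _i : ι, ‖v‖ :=
        Finset.sum_le_sum fun i _ => by simpa using PiLp.norm_apply_le v i
    _ = Fintype.card ι * ‖v‖ := by simp

lemma lt_norm_of_card_mul_lt_sum_abs {ι : Type*} [Fintype ι] {v : EuclideanSpace ℝ ι} {B : ℝ}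
    (h : Fintype.card ι * B < ∑ i, |v i|) : B < ‖v‖ :=
  lt_of_mul_lt_mul_left (h.trans_le (sum_abs_le_card_mul_norm v)) (Nat.cast_nonneg _)

lemma sum_sq_le_sum_sq_four_mul_sum_sub {ι : Type*} [Fintype ι] (w : ι → ℝ) :
    ∑ i, w i ^ 2 ≤ ∑ i, (4 * ∑ j, w j - 3 * w i) ^ 2 := by
  obtain _ | _ := isEmpty_or_nonempty ι
  · simp
  set s := ∑ j, w j
  -- the excess is `8 ∑ (s - wᵢ)² + 8 (n - 1) s²`, nonnegative as soon as `n ≥ 1`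
  have hterm : ∀ i, (4 * s - 3 * w i) ^ 2 = w i ^ 2 + 8 * (s - w i) ^ 2 + 8 * s * (s - w i) :=
    fun i => by ring
  have hdev : ∑ i, (s - w i) = (Fintype.card ι - 1) * s := by
    simp only [Finset.sum_sub_distrib, Finset.sum_const, Finset.card_univ, nsmul_eq_mul, s]; ring
  have hcard : (1 : ℝ) ≤ Fintype.card ι := by exact_mod_cast Fintype.card_pos
  simp only [hterm, Finset.sum_add_distrib, ← Finset.mul_sum, hdev]
  nlinarith [Finset.sum_nonneg fun i (_ : i ∈ Finset.univ) => sq_nonneg (s - w i), sq_nonneg s]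

lemma div_le_sq_div_sqrt {x t R : ℝ} (ht : 0 < t) (htR : t ≤ R) : x ^ 2 / R ≤ (x / √t) ^ 2 := by
  rw [div_pow, Real.sq_sqrt ht.le]
  exact div_le_div_of_nonneg_left (sq_nonneg x) ht htR

lemma hasFDerivAt_sum_mul_apply {E ι : Type*} [NormedAddCommGroup E] [NormedSpace ℝ E]
    [Fintype ι] {F : E → EuclideanSpace ℝ ι} {T : E →L[ℝ] EuclideanSpace ℝ ι} {x : E}
    (c : ι → ℝ) (hF : HasFDerivAt F T x) :
    HasFDerivAt (fun y => ∑ i, c i * F y i) ((innerSL ℝ (WithLp.toLp 2 c)).comp T) x := by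
  have hfun : (fun y => ∑ i, c i * F y i) = innerSL ℝ (WithLp.toLp 2 c) ∘ F := by
    ext y
    simp [PiLp.inner_apply, mul_comm]
  rw [hfun]
  exact (innerSL ℝ _).hasFDerivAt.comp x hF

section InnerProductSpace

variable {E : Type*} [NormedAddCommGroup E] [InnerProductSpace ℝ E]

lemma sub_le_inner_apply_smul_inv_norm {T₀ : E →L[ℝ] E} (hT₀ : (T₀ : E →ₗ[ℝ] E).IsSymmetric)
    (T : E →L[ℝ] E) (k : E) :
    ‖T₀ k‖ - ‖k‖ * ‖T - T₀‖ ≤ ⟪k, T (‖T₀ k‖⁻¹ • T₀ k)⟫ := by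
  set z := ‖T₀ k‖⁻¹ • T₀ k
  have hz : ‖z‖ ≤ 1 := by
    rcases eq_or_ne (T₀ k) 0 with h | h
    · simp [z, h]
    · exact (norm_smul_inv_norm h).le
  have hmain : ⟪k, T₀ z⟫ = ‖T₀ k‖ := by
    rw [← ContinuousLinearMap.coe_coe, ← hT₀, ContinuousLinearMap.coe_coe, real_inner_smul_right,
      real_inner_self_eq_norm_sq]
    rcases eq_or_ne ‖T₀ k‖ 0 with h | h
    · simp [h]
    · field_simp
  have herr : |⟪k, (T - T₀) z⟫| ≤ ‖k‖ * ‖T - T₀‖ :=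
    calc |⟪k, (T - T₀) z⟫| ≤ ‖k‖ * (‖T - T₀‖ * ‖z‖) :=
          (abs_real_inner_le_norm _ _).trans (by gcongr; exact (T - T₀).le_opNorm z)
      _ ≤ ‖k‖ * ‖T - T₀‖ := by
          gcongr; exact mul_le_of_le_one_right (norm_nonneg _) hz
  have hsplit : ⟪k, T z⟫ = ⟪k, T₀ z⟫ + ⟪k, (T - T₀) z⟫ := by
    rw [← inner_add_right, sub_apply, add_sub_cancel]
  linarith [neg_abs_le ⟪k, (T - T₀) z⟫]

lemma mul_norm_le_inner_apply_smul_inv_norm {T₀ T : E →L[ℝ] E}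
    (hT₀ : (T₀ : E →ₗ[ℝ] E).IsSymmetric) {k : E} {δ : ℝ} (hT₀k : 2 * δ * ‖k‖ ≤ ‖T₀ k‖)
    (hT : ‖T - T₀‖ ≤ δ) : δ * ‖k‖ ≤ ⟪k, T (‖T₀ k‖⁻¹ • T₀ k)⟫ := by
  nlinarith [sub_le_inner_apply_smul_inv_norm hT₀ T k, mul_le_mul_of_nonneg_left hT (norm_nonneg k)]

variable [CompleteSpace E]

lemma le_abs_inner_gradient_of_hasFDerivAt {g : E → ℝ} {F G : StrongDual ℝ E} {x z : E} {ν : ℝ}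
    (hg : HasFDerivAt g (F + G) x) (h : ν + |G z| ≤ F z) : ν ≤ |⟪gradient g x, z⟫| := by
  rw [gradient, InnerProductSpace.toDual_symm_apply, hg.fderiv, add_apply]
  linarith [neg_abs_le (G z), le_abs_self (F z + G z)]

lemma le_abs_inner_gradient_of_dominates {ι : Type*} [Nonempty ι] {f : E → ℝ} {Λ : ι → E → ℝ}
    {F : StrongDual ℝ E} {x z : E} {ν β : ℝ} (hf : HasFDerivAt f F x)
    (hΛ : ∀ a, DifferentiableAt ℝ (Λ a) x) (hΛz : ∀ a, |fderiv ℝ (Λ a) x z| ≤ β)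
    (hF : ν + 2 * β ≤ F z) :
    ν ≤ |⟪gradient f x, z⟫| ∧
    (∀ a, ν ≤ |⟪gradient (fun y => f y + Λ a y) x, z⟫| ∧
      ν ≤ |⟪gradient (fun y => f y - Λ a y) x, z⟫|) ∧
    (∀ a b, ν ≤ |⟪gradient (fun y => f y + Λ a y + Λ b y) x, z⟫|) ∧
    (∀ a b, ν ≤ |⟪gradient (fun y => f y + Λ a y - Λ b y) x, z⟫|) := by
  have hβ : 0 ≤ β := (abs_nonneg _).trans (hΛz (Classical.arbitrary ι))
  set G := fun a => fderiv ℝ (Λ a) x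
  have hG : ∀ a, HasFDerivAt (Λ a) (G a) x := fun a => (hΛ a).hasFDerivAt
  refine ⟨?_, fun a => ⟨?_, ?_⟩, fun a b => ?_, fun a b => ?_⟩
  · exact le_abs_inner_gradient_of_hasFDerivAt (G := 0) (by simpa using hf) (by simp; linarith)
  · exact le_abs_inner_gradient_of_hasFDerivAt (hf.add (hG a)) (by linarith [hΛz a])
  · refine le_abs_inner_gradient_of_hasFDerivAt (F := F) (G := -G a) ?_ ?_
    · rw [← sub_eq_add_neg]; exact hf.sub (hG a)
    · simp only [neg_apply, abs_neg]; linarith [hΛz a]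
  · refine le_abs_inner_gradient_of_hasFDerivAt (F := F) (G := G a + G b) ?_ ?_
    · rw [← add_assoc]; exact (hf.add (hG a)).add (hG b)
    · simp only [add_apply]
      linarith [abs_add_le (G a z) (G b z), hΛz a, hΛz b]
  · refine le_abs_inner_gradient_of_hasFDerivAt (F := F) (G := G a - G b) ?_ ?_
    · rw [← add_sub_assoc]; exact (hf.add (hG a)).sub (hG b)
    · simp only [sub_apply]
      linarith [abs_sub (G a z) (G b z), hΛz a, hΛz b]

end InnerProductSpace

lemma waveM_mulVec_apply (A : Finset ℤ) (m : ℝ) (v : ↥A → ℝ) (i : ↥A) :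
    (waveM A m).mulVec v i = 3 / (2 * Real.pi) *
      (4 * ∑ l : ↥A, v l / √(((l : ℤ) : ℝ) ^ 2 + m) - 3 * (v i / √(((i : ℤ) : ℝ) ^ 2 + m))) /
        √(((i : ℤ) : ℝ) ^ 2 + m) := by
  set lam : ↥A → ℝ := fun l => √(((l : ℤ) : ℝ) ^ 2 + m)
  have hentry : ∀ l, waveM A m i l * v l =
      3 / (2 * Real.pi) / lam i * (4 * (v l / lam l) - 3 * if i = l then v l / lam l else 0) := by
    intro l
    split_ifs with h
    · subst h; simp only [waveM, Matrix.of_apply, if_true]; ring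
    · simp only [waveM, Matrix.of_apply, if_neg h]; ring
  simp only [Matrix.mulVec, dotProduct, hentry, ← Finset.mul_sum, Finset.sum_sub_distrib,
    Finset.sum_ite_eq, Finset.mem_univ, if_true]
  ring

lemma waveM_isHermitian (A : Finset ℤ) (m : ℝ) : (waveM A m).IsHermitian :=
  Matrix.IsHermitian.ext fun i j => by
    simp only [waveM, Matrix.of_apply, star_trivial, eq_comm (a := j), mul_comm]

lemma isSymmetric_smul_toEuclideanLin_waveM (A : Finset ℤ) (m ν : ℝ) :
    ((ν • LinearMap.toContinuousLinearMap (Matrix.toEuclideanLin (waveM A m)) :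
      EuclideanSpace ℝ ↥A →L[ℝ] EuclideanSpace ℝ ↥A) :
        EuclideanSpace ℝ ↥A →ₗ[ℝ] EuclideanSpace ℝ ↥A).IsSymmetric := by
  simpa using (Matrix.isSymmetric_toEuclideanLin_iff.2 (waveM_isHermitian A m)).smul
    (conj_trivial ν)

lemma exists_pos_mul_norm_le_norm_waveM (A : Finset ℤ) :
    ∃ ε > 0, ∀ m ∈ Set.Icc (1 : ℝ) 2, ∀ v : EuclideanSpace ℝ ↥A,
      ε * ‖v‖ ≤ ‖Matrix.toEuclideanLin (waveM A m) v‖ := by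
  set R : ℝ := ∑ a ∈ A, (a : ℝ) ^ 2 + 2
  have hR : 0 < R := by positivity
  set c : ℝ := 3 / (2 * Real.pi)
  refine ⟨c / R, by positivity, fun m hm v => ?_⟩
  have hlam : ∀ i : ↥A, 0 < ((i : ℤ) : ℝ) ^ 2 + m ∧ ((i : ℤ) : ℝ) ^ 2 + m ≤ R := fun i =>
    ⟨by nlinarith [hm.1], by
      linarith [hm.2, Finset.single_le_sum (f := fun a : ℤ => (a : ℝ) ^ 2)
        (fun a _ => sq_nonneg (a : ℝ)) i.2]⟩
  set w : ↥A → ℝ := fun l => v l / √(((l : ℤ) : ℝ) ^ 2 + m)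
  have hnorm : ∀ x : EuclideanSpace ℝ ↥A, ‖x‖ ^ 2 = ∑ i, x i ^ 2 := fun x => by
    simp [EuclideanSpace.norm_sq_eq]
  rw [← sq_le_sq₀ (by positivity) (norm_nonneg _), mul_pow, hnorm, hnorm]
  calc (c / R) ^ 2 * ∑ i, v i ^ 2 = c ^ 2 / R * ∑ i, v i ^ 2 / R := by
        rw [← Finset.sum_div]; field_simp
    _ ≤ c ^ 2 / R * ∑ i, w i ^ 2 := by
        gcongr with i; exact div_le_sq_div_sqrt (hlam i).1 (hlam i).2
    _ ≤ c ^ 2 / R * ∑ i, (4 * ∑ j, w j - 3 * w i) ^ 2 :=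
        mul_le_mul_of_nonneg_left (sum_sq_le_sum_sq_four_mul_sum_sub w) (by positivity)
    _ = ∑ i, (c * (4 * ∑ j, w j - 3 * w i)) ^ 2 / R := by
        simp only [Finset.mul_sum, mul_pow]; ring_nf
    _ ≤ ∑ i, (Matrix.toEuclideanLin (waveM A m) v) i ^ 2 := by
        gcongr with i
        rw [Matrix.toLpLin_apply, PiLp.toLp_apply, waveM_mulVec_apply]
        exact div_le_sq_div_sqrt (hlam i).1 (hlam i).2

lemma differentiable_waveLambda (A : Finset ℤ) (m ν : ℝ) (a : ℤ) :
    Differentiable ℝ (waveLambda A m ν a) := by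
  unfold waveLambda; fun_prop

lemma abs_fderiv_waveLambda_apply_le (A : Finset ℤ) {m ν : ℝ} (hm : 1 ≤ m) (hν : 0 ≤ ν) (a : ℤ)
    (ρ z : EuclideanSpace ℝ ↥A) :
    |fderiv ℝ (waveLambda A m ν a) ρ z| ≤ ν * Fintype.card ↥A * ‖z‖ := by
  have hsqrt : ∀ x : ℝ, 1 ≤ √(x ^ 2 + m) := fun x =>
    Real.one_le_sqrt.2 (by nlinarith [sq_nonneg x])
  set w : EuclideanSpace ℝ ↥A := WithLp.toLp 2 fun l => (√(((l : ℤ) : ℝ) ^ 2 + m))⁻¹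
  set c := ν * (3 / Real.pi) * (1 / √((a : ℝ) ^ 2 + m))
  have hLambda : waveLambda A m ν a = fun ρ => √((a : ℝ) ^ 2 + m) + c * innerSL ℝ w ρ := by
    ext ρ
    simp [waveLambda, c, w, PiLp.inner_apply, div_eq_mul_inv]
  rw [hLambda, (((innerSL ℝ w).hasFDerivAt.const_mul c).const_add _).fderiv]
  have hc : c ≤ ν := by
    have : 3 / Real.pi ≤ 1 := (div_le_one Real.pi_pos).2 Real.pi_gt_three.le
    have : 1 / √((a : ℝ) ^ 2 + m) ≤ 1 := (div_le_one (by linarith [hsqrt a])).2 (hsqrt a)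
    calc c ≤ ν * 1 * 1 := by simp only [c]; gcongr
      _ = ν := by ring
  have hw : |⟪w, z⟫| ≤ Fintype.card ↥A * ‖z‖ := by
    refine le_trans ?_ (sum_abs_le_card_mul_norm z)
    simp only [PiLp.inner_apply, w]
    refine (Finset.abs_sum_le_sum_abs _ _).trans (Finset.sum_le_sum fun l _ => ?_)
    rw [Real.inner_apply, abs_mul, abs_inv, abs_of_pos (by linarith [hsqrt l])]
    exact mul_le_of_le_one_left (abs_nonneg _) (inv_le_one_of_one_le₀ (hsqrt _))
  simp only [smul_apply, innerSL_apply_apply, smul_eq_mul, abs_mul]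
  rw [abs_of_nonneg (by positivity : 0 ≤ c), mul_assoc ν]
  exact mul_le_mul hc hw (abs_nonneg _) hν

theorem stmt_19_general (A : Finset ℤ)
    (γ : ℝ) (hγ : 0 < γ) :
    ∃ ν₀ : ℝ, 0 < ν₀ ∧ ∃ c : ℝ, 0 < c ∧
      ∀ m ∈ Set.Icc (1:ℝ) 2,
      ∀ ν : ℝ, 0 < ν → ν ≤ ν₀ →
      ∀ Ω' : EuclideanSpace ℝ ↥A → EuclideanSpace ℝ ↥A,
        (∀ ρ ∈ waveCube A, DifferentiableAt ℝ Ω' ρ) →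
        (∀ ρ ∈ waveCube A,
          ‖Ω' ρ - waveOmega A m ν ρ‖
            + ‖fderiv ℝ Ω' ρ
                - ν • (LinearMap.toContinuousLinearMap
                    (Matrix.toEuclideanLin (waveM A m)))‖ ≤ c * ν) →
      ∀ k : ↥A → ℤ, ν ^ (-γ) < ((∑ a : ↥A, |k a| : ℤ) : ℝ) →
        ∃ z : EuclideanSpace ℝ ↥A, ‖z‖ = 1 ∧
          ∀ ρ ∈ waveCube A,
            -- (i)
            (ν ≤ |⟪gradient (fun ρ' => ∑ s : ↥A, (k s : ℝ) * Ω' ρ' s) ρ, z⟫|) ∧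
            -- (ii), both signs
            (∀ a : ℤ, a ∉ A →
              ν ≤ |⟪gradient (fun ρ' => (∑ s : ↥A, (k s : ℝ) * Ω' ρ' s)
                      + waveLambda A m ν a ρ') ρ, z⟫| ∧
              ν ≤ |⟪gradient (fun ρ' => (∑ s : ↥A, (k s : ℝ) * Ω' ρ' s)
                      - waveLambda A m ν a ρ') ρ, z⟫|) ∧
            -- (iii)
            (∀ a b : ℤ, a ∉ A → b ∉ A →
              ν ≤ |⟪gradient (fun ρ' => (∑ s : ↥A, (k s : ℝ) * Ω' ρ' s)
                      + waveLambda A m ν a ρ' + waveLambda A m ν b ρ') ρ, z⟫|) ∧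
            -- (iv)
            (∀ a b : ℤ, a ∉ A → b ∉ A →
              ν ≤ |⟪gradient (fun ρ' => (∑ s : ↥A, (k s : ℝ) * Ω' ρ' s)
                      + waveLambda A m ν a ρ' - waveLambda A m ν b ρ') ρ, z⟫|) := by
  obtain ⟨ε, hε, hM⟩ := exists_pos_mul_norm_le_norm_waveM A
  set n : ℝ := (Fintype.card ↥A : ℝ)
  set B := 2 * (1 + 2 * n) / ε
  have hK : 0 < n * B + 1 := by positivity
  refine ⟨(n * B + 1) ^ (-γ)⁻¹, by positivity, ε / 2, half_pos hε, ?_⟩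
  intro m hm ν hν hνle Ω' hdiff hclose k hk
  set k' : EuclideanSpace ℝ ↥A := WithLp.toLp 2 fun s => (k s : ℝ)
  have hk' : B < ‖k'‖ := by
    refine lt_norm_of_card_mul_lt_sum_abs ?_
    have := (Real.le_rpow_inv_iff_of_neg hν hK (neg_neg_of_pos hγ)).1 hνle
    push_cast at hk
    linarith
  set T₀ := ν • LinearMap.toContinuousLinearMap (Matrix.toEuclideanLin (waveM A m))
  have hT₀k : 2 * (ε / 2 * ν) * ‖k'‖ ≤ ‖T₀ k'‖ := by
    have := mul_le_mul_of_nonneg_left (hM m hm k') hν.le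
    simp only [T₀, smul_apply, LinearMap.coe_toContinuousLinearMap', norm_smul,
      Real.norm_of_nonneg hν.le]
    linarith
  have hT₀k_ne : T₀ k' ≠ 0 := norm_pos_iff.1 <|
    (mul_pos (by positivity) ((by positivity : 0 ≤ B).trans_lt hk')).trans_le hT₀k
  set z := ‖T₀ k'‖⁻¹ • T₀ k'
  have hz : ‖z‖ = 1 := norm_smul_inv_norm hT₀k_ne
  refine ⟨z, hz, fun ρ hρ => ?_⟩
  have hdom : ν + 2 * (ν * n * ‖z‖) ≤ (innerSL ℝ k').comp (fderiv ℝ Ω' ρ) z := by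
    have hF : ε / 2 * ν * ‖k'‖ ≤ ⟪k', fderiv ℝ Ω' ρ z⟫ :=
      mul_norm_le_inner_apply_smul_inv_norm (isSymmetric_smul_toEuclideanLin_waveM A m ν) hT₀k
        (by linarith [hclose ρ hρ, norm_nonneg (Ω' ρ - waveOmega A m ν ρ)])
    have hB : ν * (1 + 2 * n) ≤ ε / 2 * ν * ‖k'‖ := by
      calc ν * (1 + 2 * n) = ε / 2 * ν * B := by simp only [B]; field_simp
        _ ≤ ε / 2 * ν * ‖k'‖ := by gcongr
    rw [hz, ContinuousLinearMap.comp_apply, innerSL_apply_apply]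
    linarith
  obtain ⟨h1, h2, h3, h4⟩ := le_abs_inner_gradient_of_dominates
    (hasFDerivAt_sum_mul_apply _ (hdiff ρ hρ).hasFDerivAt)
    (fun a => (differentiable_waveLambda A m ν a).differentiableAt)
    (fun a => abs_fderiv_waveLambda_apply_le A hm.1 hν.le a ρ z) hdom
  exact ⟨h1, fun a _ => h2 a, fun a b _ _ => h3 a b, fun a b _ _ => h4 a b⟩

/-- Transversality for large `k`: with the above data, for every
`γ > 0` there are `ν₀, c > 0` depending only on `𝒜` and `γ` such that for `0 < ν ≤ ν₀`,
any `C¹`-small perturbation `Ω′` of `Ω` on `D` (i.e. `‖Ω′(ρ) − Ω(ρ)‖ + ‖DΩ′(ρ) − νM‖ ≤ cν`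
on `D`) and any `k ∈ ℤ^𝒜` with `|k| > ν^{−γ}`, there is a unit vector `z_k` such that for
all `ρ ∈ D` and all `a, b ∈ ℒ = ℤ \ 𝒜` the four gradient lower bounds hold. -/
theorem stmt_19 (A : Finset ℤ) (hadm : ∀ j ∈ A, j ≠ 0 → -j ∉ A) (hn : 1 ≤ A.card)
    (γ : ℝ) (hγ : 0 < γ) :
    ∃ ν₀ : ℝ, 0 < ν₀ ∧ ∃ c : ℝ, 0 < c ∧
      ∀ m ∈ Set.Icc (1:ℝ) 2,
      ∀ ν : ℝ, 0 < ν → ν ≤ ν₀ →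
      ∀ Ω' : EuclideanSpace ℝ ↥A → EuclideanSpace ℝ ↥A,
        (∀ ρ ∈ waveCube A, DifferentiableAt ℝ Ω' ρ) →
        (∀ ρ ∈ waveCube A,
          ‖Ω' ρ - waveOmega A m ν ρ‖
            + ‖fderiv ℝ Ω' ρ
                - ν • (LinearMap.toContinuousLinearMap
                    (Matrix.toEuclideanLin (waveM A m)))‖ ≤ c * ν) →
      ∀ k : ↥A → ℤ, ν ^ (-γ) < ((∑ a : ↥A, |k a| : ℤ) : ℝ) →
        ∃ z : EuclideanSpace ℝ ↥A, ‖z‖ = 1 ∧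
          ∀ ρ ∈ waveCube A,
            -- (i)
            (ν ≤ |⟪gradient (fun ρ' => ∑ s : ↥A, (k s : ℝ) * Ω' ρ' s) ρ, z⟫|) ∧
            -- (ii), both signs
            (∀ a : ℤ, a ∉ A →
              ν ≤ |⟪gradient (fun ρ' => (∑ s : ↥A, (k s : ℝ) * Ω' ρ' s)
                      + waveLambda A m ν a ρ') ρ, z⟫| ∧
              ν ≤ |⟪gradient (fun ρ' => (∑ s : ↥A, (k s : ℝ) * Ω' ρ' s)
                      - waveLambda A m ν a ρ') ρ, z⟫|) ∧
            -- (iii)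
            (∀ a b : ℤ, a ∉ A → b ∉ A →
              ν ≤ |⟪gradient (fun ρ' => (∑ s : ↥A, (k s : ℝ) * Ω' ρ' s)
                      + waveLambda A m ν a ρ' + waveLambda A m ν b ρ') ρ, z⟫|) ∧
            -- (iv)
            (∀ a b : ℤ, a ∉ A → b ∉ A →
              ν ≤ |⟪gradient (fun ρ' => (∑ s : ↥A, (k s : ℝ) * Ω' ρ' s)
                      + waveLambda A m ν a ρ' - waveLambda A m ν b ρ') ρ, z⟫|) :=
  stmt_19_general A γ hγ
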